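/- arXiv:0806.3260 — 2 statements merged into one kernel-verified Lean document; each statement's English description precedes it below -/
import Mathlib

section
/- (Alternating residuals, Hermitian case.) Let A be an n×n complex Hermitian invertible matrix (Aᴴ = A) with n ≥ 2, and take the restart parameter m = n−1. Let r₀, r₁, …, r_q ∈ ℂⁿ be a sequence of nonzero vectors such that for each k the vector r_k is a GMRES(n−1) residual of A from r_{k−1}. Then for every k = 1, …, q−1 one has r_{k+1} = α_k r_{k−1} with α_k = ‖r_{k+1}‖²/‖r_k‖², and 0 < α_k ≤ 1. -/
open Polynomial Matrix

/-- The Euclidean (ℓ²) norm of a vector in ℂⁿ. -/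
noncomputable def euclidNorm {n : ℕ} (v : Fin n → ℂ) : ℝ :=
  ‖(WithLp.equiv 2 (Fin n → ℂ)).symm v‖

/-- `s` is a GMRES(m) residual of `A` from `r`: there is a polynomial `p` of degree at most `m`
with `p 0 = 1` such that `s = p(A) r` and `‖s‖ ≤ ‖q(A) r‖` for all admissible `q`. -/
def IsGMRESResidual {n : ℕ} (m : ℕ) (A : Matrix (Fin n) (Fin n) ℂ)
    (r s : Fin n → ℂ) : Prop :=
  ∃ p : ℂ[X], p.natDegree ≤ m ∧ p.eval 0 = 1 ∧ s = (aeval A p).mulVec r ∧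
    ∀ q : ℂ[X], q.natDegree ≤ m → q.eval 0 = 1 →
      euclidNorm s ≤ euclidNorm ((aeval A q).mulVec r)

/-- The Krylov matrix `K(A, r) = [r, Ar, …, Aᵐ r]`, an `n × (m+1)` matrix. -/
noncomputable def krylov {n : ℕ} (m : ℕ) (A : Matrix (Fin n) (Fin n) ℂ) (r : Fin n → ℂ) :
    Matrix (Fin n) (Fin (m + 1)) ℂ :=
  Matrix.of fun i j => (A ^ (j : ℕ)).mulVec r i

/-!
A GMRES(m) residual `s` of `r` is orthogonal to `K = span {T r, …, Tᵐ r}` and `r - s ∈ K`, so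
`⟪r, s⟫ = ‖s‖²`. If `s ≠ 0` and `T` is injective, no nonzero polynomial of degree `≤ m` kills `r`
(after dividing out the power of `X` and normalising the constant term it would force `s = 0`), so
`dim K = m`, and in dimension `m + 1` the complement `Kᗮ` is a line. For three consecutive residuals
`u, v, w` it contains `w`, and also `u` when `T` is self-adjoint, because `v ⊥ span {T u, …, Tᵐ u}`
transposes to `u ⊥ span {T v, …, Tᵐ v}`. Hence `w = c • u`, and pairing with `v` gives
`‖w‖² = c ⟪v, u⟫ = c ‖v‖²`.
-/

open Module
open scoped InnerProductSpace

section Krylov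

variable {R M : Type*} [CommRing R] [AddCommGroup M] [Module R M]

def krylovSubspace (T : Module.End R M) (m : ℕ) (x : M) : Submodule R M :=
  Submodule.span R ((fun j => (T ^ j) x) '' Set.Iio m)

theorem natDegree_mul_X_le_iff {g : R[X]} {m : ℕ} :
    (g * X).natDegree ≤ m ↔ g ∈ degreeLT R m := by
  rw [natDegree_le_iff_coeff_eq_zero, mem_degreeLT, degree_lt_iff_coeff_zero]
  constructor
  · intro h j hj
    rw [← coeff_mul_X]
    exact h _ (by omega)
  · rintro h (_ | j) hj
    · omega
    · rw [coeff_mul_X]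
      exact h j (by omega)

theorem krylovSubspace_eq_map (T : Module.End R M) (m : ℕ) (x : M) :
    krylovSubspace T m x =
      (degreeLT R m).map ((LinearMap.applyₗ x).comp (aeval T).toLinearMap) := by
  classical
  rw [degreeLT_eq_span_X_pow, Submodule.map_span, krylovSubspace, Finset.coe_image,
    Set.image_image, Finset.coe_range]
  simp

theorem mem_krylovSubspace {T : Module.End R M} {m : ℕ} {x y : M} :
    y ∈ krylovSubspace T m x ↔ ∃ g ∈ degreeLT R m, aeval T g x = y := by
  rw [krylovSubspace_eq_map]
  rfl

theorem pow_apply_mem_krylovSubspace (T : Module.End R M) {m j : ℕ} (hj : j < m) (x : M) :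
    (T ^ j) x ∈ krylovSubspace T m x :=
  Submodule.subset_span ⟨j, hj, rfl⟩

theorem aeval_mul_X_apply (T : Module.End R M) (g : R[X]) (x : M) :
    aeval T (g * X) x = aeval T g (T x) := by
  rw [map_mul, aeval_X, Module.End.mul_apply]

end Krylov

theorem finrank_krylovSubspace {K M : Type*} [Field K] [AddCommGroup M] [Module K M]
    {T : Module.End K M} {m : ℕ} {x : M} (h : ∀ g ∈ degreeLT K m, aeval T g x = 0 → g = 0) :
    finrank K (krylovSubspace T m x) = m := by
  set f := ((LinearMap.applyₗ x).comp (aeval T).toLinearMap).comp (degreeLT K m).subtype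
  have hf : Function.Injective f := by
    rw [← LinearMap.ker_eq_bot, LinearMap.ker_eq_bot']
    intro g hg
    exact Subtype.ext (h g g.2 hg)
  rw [krylovSubspace_eq_map, ← Submodule.range_subtype (degreeLT K m), ← LinearMap.range_comp,
    LinearMap.finrank_range_of_inj hf, (degreeLTEquiv K m).finrank_eq, finrank_fin_fun]

section GMRES

variable {𝕜 E : Type*} [RCLike 𝕜] [NormedAddCommGroup E] [InnerProductSpace 𝕜 E]

def LinearMap.IsGMRESResidual (T : E →ₗ[𝕜] E) (m : ℕ) (r s : E) : Prop :=
  ∃ p : 𝕜[X], p.natDegree ≤ m ∧ p.eval 0 = 1 ∧ s = aeval T p r ∧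
    ∀ q : 𝕜[X], q.natDegree ≤ m → q.eval 0 = 1 → ‖s‖ ≤ ‖aeval T q r‖

theorem Submodule.mem_orthogonal_of_forall_norm_le_norm_sub {K : Submodule 𝕜 E} {s : E}
    (h : ∀ y ∈ K, ‖s‖ ≤ ‖s - y‖) : s ∈ Kᗮ := by
  have hinf : ‖s - 0‖ = ⨅ y : K, ‖s - y‖ := by
    refine le_antisymm (le_ciInf fun y => by simpa using h y y.2) ?_
    exact ciInf_le ⟨0, Set.forall_mem_range.2 fun _ => norm_nonneg _⟩ (0 : K)
  rw [Submodule.mem_orthogonal']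
  simpa using (K.norm_eq_iInf_iff_inner_eq_zero K.zero_mem).1 hinf

namespace LinearMap.IsGMRESResidual

variable {T : E →ₗ[𝕜] E} {m : ℕ} {r s : E}

theorem norm_le (h : T.IsGMRESResidual m r s) : ‖s‖ ≤ ‖r‖ := by
  obtain ⟨p, -, -, -, hmin⟩ := h
  simpa using hmin 1 (by simp) (by simp)

theorem ne_zero_of_ne_zero (h : T.IsGMRESResidual m r s) (hs : s ≠ 0) : r ≠ 0 := by
  rintro rfl
  obtain ⟨p, -, -, rfl, -⟩ := h
  exact hs (map_zero _)

theorem sub_mem_krylovSubspace (h : T.IsGMRESResidual m r s) :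
    s - r ∈ krylovSubspace T m (T r) := by
  obtain ⟨p, hdeg, h0, rfl, -⟩ := h
  obtain ⟨g, hg⟩ : X ∣ p - 1 := by
    rw [X_dvd_iff, coeff_sub, coeff_zero_eq_eval_zero, h0, coeff_one_zero, sub_self]
  rw [mul_comm] at hg
  refine mem_krylovSubspace.2 ⟨g, natDegree_mul_X_le_iff.1 ?_, ?_⟩
  · rw [← hg]
    exact (natDegree_sub_le _ _).trans (by simpa using hdeg)
  · rw [← aeval_mul_X_apply, ← hg, map_sub, map_one, LinearMap.sub_apply, Module.End.one_apply]

theorem mem_orthogonal (h : T.IsGMRESResidual m r s) :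
    s ∈ (krylovSubspace T m (T r))ᗮ := by
  obtain ⟨p, hdeg, h0, rfl, hmin⟩ := h
  refine Submodule.mem_orthogonal_of_forall_norm_le_norm_sub fun y hy => ?_
  obtain ⟨g, hg, rfl⟩ := mem_krylovSubspace.1 hy
  rw [← aeval_mul_X_apply, ← LinearMap.sub_apply, ← map_sub]
  refine hmin _ ((natDegree_sub_le _ _).trans (max_le hdeg (natDegree_mul_X_le_iff.2 hg))) ?_
  simp [h0]

theorem inner_eq_norm_sq (h : T.IsGMRESResidual m r s) : ⟪r, s⟫_𝕜 = (‖s‖ : 𝕜) ^ 2 := by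
  have := Submodule.inner_right_of_mem_orthogonal h.sub_mem_krylovSubspace h.mem_orthogonal
  rwa [inner_sub_left, inner_self_eq_norm_sq_to_K, sub_eq_zero, eq_comm] at this

theorem aeval_apply_ne_zero (hT : Function.Injective T) (h : T.IsGMRESResidual m r s)
    (hs : s ≠ 0) {g : 𝕜[X]} (hg : g ≠ 0) (hdeg : g.natDegree ≤ m) : aeval T g r ≠ 0 := by
  obtain ⟨p, -, -, -, hmin⟩ := h
  obtain ⟨g', hgg', hg'⟩ := g.exists_eq_pow_rootMultiplicity_mul_and_not_dvd hg 0
  simp only [map_zero, sub_zero] at hgg' hg'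
  rw [X_dvd_iff, coeff_zero_eq_eval_zero] at hg'
  intro hgr
  have hg'r : aeval T g' r = 0 := by
    rw [hgg', map_mul, map_pow, aeval_X, Module.End.mul_apply] at hgr
    exact (Module.End.coe_pow T _ ▸ hT.iterate _) (hgr.trans (map_zero _).symm)
  have hdeg' : (C (g'.eval 0)⁻¹ * g').natDegree ≤ m :=
    (natDegree_C_mul_le _ _).trans <|
      (natDegree_le_of_dvd (Dvd.intro_left _ hgg'.symm) hg).trans hdeg
  have := hmin _ hdeg' (by simp [hg'])
  rw [map_mul, aeval_C, Module.End.mul_apply, hg'r, map_zero, norm_zero] at this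
  exact hs (norm_le_zero_iff.1 this)

theorem finrank_krylovSubspace (hT : Function.Injective T) (h : T.IsGMRESResidual m r s)
    (hs : s ≠ 0) : finrank 𝕜 (krylovSubspace T m (T r)) = m := by
  refine _root_.finrank_krylovSubspace fun g hg hgr => ?_
  by_contra hg0
  refine h.aeval_apply_ne_zero hT hs (mul_ne_zero hg0 X_ne_zero) (natDegree_mul_X_le_iff.2 hg) ?_
  rwa [aeval_mul_X_apply]

end LinearMap.IsGMRESResidual

theorem LinearMap.IsSymmetric.mem_orthogonal_krylovSubspace_comm {T : E →ₗ[𝕜] E}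
    (hT : T.IsSymmetric) {m : ℕ} {u v : E} (h : v ∈ (krylovSubspace T m (T u))ᗮ) :
    u ∈ (krylovSubspace T m (T v))ᗮ := by
  have hle : krylovSubspace T m (T v) ≤ (𝕜 ∙ u)ᗮ := by
    rw [krylovSubspace, Submodule.span_le]
    rintro _ ⟨j, hj, rfl⟩
    dsimp only
    rw [SetLike.mem_coe, Submodule.mem_orthogonal_singleton_iff_inner_right,
      ← Module.End.mul_apply, ← pow_succ, ← hT.pow, pow_succ, Module.End.mul_apply]
    exact Submodule.inner_right_of_mem_orthogonal (pow_apply_mem_krylovSubspace T hj (T u)) h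
  exact fun y hy => inner_eq_zero_symm.1
    (Submodule.mem_orthogonal_singleton_iff_inner_right.1 (hle hy))

theorem LinearMap.IsGMRESResidual.eq_smul_of_isSymmetric [FiniteDimensional 𝕜 E]
    {T : E →ₗ[𝕜] E} (hT : T.IsSymmetric) (hinj : Function.Injective T) {m : ℕ}
    (hE : finrank 𝕜 E = m + 1) {u v w : E} (huv : T.IsGMRESResidual m u v)
    (hvw : T.IsGMRESResidual m v w) (hw : w ≠ 0) :
    w = ((‖w‖ ^ 2 / ‖v‖ ^ 2 : ℝ) : 𝕜) • u := by
  set K := krylovSubspace T m (T v)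
  have hv : v ≠ 0 := hvw.ne_zero_of_ne_zero hw
  have hu : u ≠ 0 := huv.ne_zero_of_ne_zero hv
  have hKo : finrank 𝕜 Kᗮ = 1 := by
    have := K.finrank_add_finrank_orthogonal
    rw [hvw.finrank_krylovSubspace hinj hw, hE] at this
    omega
  have huK : u ∈ Kᗮ := hT.mem_orthogonal_krylovSubspace_comm huv.mem_orthogonal
  obtain ⟨c, hc⟩ := (finrank_eq_one_iff_of_nonzero' (⟨u, huK⟩ : Kᗮ) (by simpa using hu)).1 hKo
    ⟨w, hvw.mem_orthogonal⟩
  replace hc : c • u = w := congrArg Subtype.val hc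
  have hcv : (‖w‖ : 𝕜) ^ 2 = c * (‖v‖ : 𝕜) ^ 2 := by
    rw [← hvw.inner_eq_norm_sq, ← hc, inner_smul_right, ← inner_conj_symm, huv.inner_eq_norm_sq]
    simp
  subst hc
  congr 1
  push_cast
  rw [hcv, mul_div_cancel_right₀ _ (by simpa using hv)]

end GMRES

theorem Matrix.toLp_aeval_mulVec {ι 𝕜 : Type*} [Fintype ι] [DecidableEq ι] [RCLike 𝕜]
    (A : Matrix ι ι 𝕜) (p : 𝕜[X]) (x : ι → 𝕜) :
    WithLp.toLp 2 (aeval A p *ᵥ x) = aeval (toEuclideanLin A) p (WithLp.toLp 2 x) := by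
  rw [show toEuclideanLin A = toLpLinAlgEquiv 2 A from rfl, aeval_algHom_apply]
  rfl

theorem IsGMRESResidual.toEuclideanLin {n m : ℕ} {A : Matrix (Fin n) (Fin n) ℂ}
    {r s : Fin n → ℂ} (h : IsGMRESResidual m A r s) :
    (toEuclideanLin A).IsGMRESResidual m (WithLp.toLp 2 r) (WithLp.toLp 2 s) := by
  obtain ⟨p, hp, hp0, rfl, hmin⟩ := h
  exact ⟨p, hp, hp0, toLp_aeval_mulVec A p r,
    fun q hq hq0 => toLp_aeval_mulVec A q r ▸ hmin q hq hq0⟩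

theorem gmres_alternating_residuals_hermitian_general {n : ℕ} (q : ℕ)
    (A : Matrix (Fin n) (Fin n) ℂ) (hherm : Aᴴ = A) (hA : IsUnit A)
    (r : ℕ → Fin n → ℂ) (hr : ∀ k ≤ q, r k ≠ 0)
    (hres : ∀ k < q, IsGMRESResidual (n - 1) A (r k) (r (k + 1))) :
    ∀ k, 1 ≤ k → k < q →
      r (k + 1) = ((euclidNorm (r (k + 1)) ^ 2 / euclidNorm (r k) ^ 2 : ℝ) : ℂ) • r (k - 1) ∧
        0 < euclidNorm (r (k + 1)) ^ 2 / euclidNorm (r k) ^ 2 ∧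
          euclidNorm (r (k + 1)) ^ 2 / euclidNorm (r k) ^ 2 ≤ 1 := by
  rintro k hk hkq
  obtain ⟨j, rfl⟩ : ∃ j, k = j + 1 := ⟨k - 1, by omega⟩
  have hsymm : (toEuclideanLin A).IsSymmetric := isSymmetric_toEuclideanLin_iff.2 hherm
  have hinj : Function.Injective (toEuclideanLin A) :=
    (WithLp.toLp_injective 2).comp <|
      (mulVec_injective_iff_isUnit.2 hA).comp (WithLp.ofLp_injective 2)
  obtain ⟨i, -⟩ := Function.ne_iff.1 (hr 0 (by omega))
  have hE : finrank ℂ (EuclideanSpace ℂ (Fin n)) = n - 1 + 1 := by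
    rw [finrank_euclideanSpace_fin]; have := i.pos; omega
  have h₁ := (hres j (by omega)).toEuclideanLin
  have h₂ := (hres (j + 1) hkq).toEuclideanLin
  have hw : WithLp.toLp 2 (r (j + 2)) ≠ 0 := by simpa using hr (j + 2) hkq
  have hv : 0 < euclidNorm (r (j + 1)) := norm_pos_iff.2 (h₂.ne_zero_of_ne_zero hw)
  have hw' : 0 < euclidNorm (r (j + 2)) := norm_pos_iff.2 hw
  refine ⟨WithLp.toLp_injective 2 ?_, by positivity, ?_⟩
  · exact h₁.eq_smul_of_isSymmetric hsymm hinj hE h₂ hw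
  · exact div_le_one_of_le₀ (pow_le_pow_left₀ (norm_nonneg _) h₂.norm_le 2) (by positivity)

/-- Alternating residuals, Hermitian case: for GMRES(n-1) applied to a Hermitian invertible
matrix, `r_{k+1} = α_k r_{k-1}` with `α_k = ‖r_{k+1}‖²/‖r_k‖² ∈ (0, 1]`. -/
theorem gmres_alternating_residuals_hermitian {n : ℕ} (hn : 2 ≤ n) (q : ℕ)
    (A : Matrix (Fin n) (Fin n) ℂ) (hherm : Aᴴ = A) (hA : IsUnit A)
    (r : ℕ → Fin n → ℂ) (hr : ∀ k ≤ q, r k ≠ 0)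
    (hres : ∀ k < q, IsGMRESResidual (n - 1) A (r k) (r (k + 1))) :
    ∀ k, 1 ≤ k → k < q →
      r (k + 1) = ((euclidNorm (r (k + 1)) ^ 2 / euclidNorm (r k) ^ 2 : ℝ) : ℂ) • r (k - 1) ∧
        0 < euclidNorm (r (k + 1)) ^ 2 / euclidNorm (r k) ^ 2 ∧
          euclidNorm (r (k + 1)) ^ 2 / euclidNorm (r k) ^ 2 ≤ 1 :=
  gmres_alternating_residuals_hermitian_general q A hherm hA r hr hres
end

section
/- (Alternating residuals, skew-Hermitian case.) Let A be an n×n complex skew-Hermitian invertible matrix (Aᴴ = −A) with n ≥ 2, and take the restart parameter m = n−1. Let r₀, r₁, …, r_q ∈ ℂⁿ be a sequence of nonzero vectors such that for each k the vector r_k is a GMRES(n−1) residual of A from r_{k−1}. Then for every k = 1, …, q−1 one has r_{k+1} = α_k r_{k−1} with α_k = ‖r_{k+1}‖²/‖r_k‖², and 0 < α_k ≤ 1. -/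
open Polynomial Matrix

/-!
The GMRES(m) residual `s` from `r` is `r` minus the orthogonal projection of `r` onto
`A·K = span {A r, …, Aᵐ r}`, so `s ⊥ A·K` and `⟪s, r⟫ = ‖s‖²`. If `A` is invertible and `s ≠ 0`,
the vectors `A r, …, Aᵐ r` are independent, since a dependency would yield an admissible polynomial
annihilating `r`; for `m = n - 1` the complement `(A·K)ᗮ` is therefore a line. For consecutive
residuals `r_{k-1}, r_k, r_{k+1}` take `K = K(A, r_k)`: `r_{k+1}` lies on that line, and so does
`r_{k-1}`, because skew-Hermitian symmetry gives `⟪Aʲ r_k, r_{k-1}⟫ = ±⟪r_k, Aʲ r_{k-1}⟫ = 0`.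
Hence `r_{k+1} = α r_{k-1}`, and pairing with `r_k` gives `‖r_{k+1}‖² = conj α · ‖r_k‖²`.
-/

open WithLp Module

theorem Submodule.mem_orthogonal_of_forall_norm_le_norm_add {𝕜 E : Type*} [RCLike 𝕜]
    [NormedAddCommGroup E] [InnerProductSpace 𝕜 E] {K : Submodule 𝕜 E} {s : E}
    (h : ∀ u ∈ K, ‖s‖ ≤ ‖s + u‖) : s ∈ Kᗮ := by
  have hmin : ‖s - 0‖ = ⨅ w : K, ‖s - w‖ :=
    le_antisymm (le_ciInf fun w => by simpa [sub_eq_add_neg] using h (-w) (K.neg_mem w.2))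
      (by simpa using ciInf_le ⟨0, Set.forall_mem_range.2 fun w : K => norm_nonneg (s - w)⟩ 0)
  exact (K.mem_orthogonal' s).2
    (by simpa using (K.norm_eq_iInf_iff_inner_eq_zero K.zero_mem).1 hmin)

theorem Submodule.mem_orthogonal_span_range_iff {𝕜 E ι : Type*} [RCLike 𝕜]
    [NormedAddCommGroup E] [InnerProductSpace 𝕜 E] {v : ι → E} {y : E} :
    y ∈ (span 𝕜 (Set.range v))ᗮ ↔ ∀ i, inner 𝕜 (v i) y = 0 := by
  refine ⟨fun h i => inner_right_of_mem_orthogonal (subset_span (Set.mem_range_self i)) h,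
    fun h => (mem_orthogonal _ _).2 fun u hu => ?_⟩
  have hle : span 𝕜 (Set.range v) ≤ (𝕜 ∙ y)ᗮ :=
    span_le.2 (Set.range_subset_iff.2 fun i => mem_orthogonal_singleton_iff_inner_left.2 (h i))
  exact mem_orthogonal_singleton_iff_inner_left.1 (hle hu)

theorem eq_ofReal_div_of_eq_smul {E : Type*} [NormedAddCommGroup E] [InnerProductSpace ℂ E]
    {x y z : E} {a : ℂ} (hxy : x = a • y) (hxz : inner ℂ x z = (‖x‖ : ℂ) ^ 2)
    (hzy : inner ℂ z y = (‖z‖ : ℂ) ^ 2) (hz : z ≠ 0) : a = ((‖x‖ ^ 2 / ‖z‖ ^ 2 : ℝ) : ℂ) := by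
  have hconj : starRingEnd ℂ a * (‖z‖ : ℂ) ^ 2 = (‖x‖ : ℂ) ^ 2 := by
    rw [← hxz, hxy, inner_smul_left, ← inner_conj_symm, hzy]
    simp
  have hz2 : (‖z‖ : ℂ) ^ 2 ≠ 0 := by simpa using hz
  have : starRingEnd ℂ a = ((‖x‖ ^ 2 / ‖z‖ ^ 2 : ℝ) : ℂ) := by
    rw [Complex.ofReal_div, eq_div_iff (by exact_mod_cast hz2)]
    exact_mod_cast hconj
  simpa using congrArg (starRingEnd ℂ) this

theorem exists_eval_zero_eq_one_of_aeval_mulVec_eq_zero {K ι : Type*} [Field K] [Fintype ι]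
    [DecidableEq ι] {A : Matrix ι ι K} (hA : IsUnit A) {r : ι → K} {g : K[X]} (hg : g ≠ 0)
    (hgr : aeval A g *ᵥ r = 0) :
    ∃ p : K[X], p.natDegree ≤ g.natDegree ∧ p.eval 0 = 1 ∧ aeval A p *ᵥ r = 0 := by
  obtain ⟨h, hgh, hX⟩ := g.exists_eq_pow_rootMultiplicity_mul_and_not_dvd hg 0
  rw [map_zero, sub_zero] at hgh hX
  rw [X_dvd_iff, coeff_zero_eq_eval_zero] at hX
  have hhr : aeval A h *ᵥ r = 0 := by
    refine mulVec_injective_iff_isUnit.2 (hA.pow (rootMultiplicity 0 g)) ?_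
    rw [mulVec_mulVec, ← aeval_X_pow (R := K), ← map_mul, ← hgh, hgr, mulVec_zero]
  refine ⟨C (h.eval 0)⁻¹ * h,
    (natDegree_C_mul_le _ _).trans (natDegree_le_of_dvd (Dvd.intro_left _ hgh.symm) hg), ?_, ?_⟩
  · rw [eval_mul, eval_C, inv_mul_cancel₀ hX]
  · rw [← smul_eq_C_mul, map_smul, smul_mulVec, hhr, smul_zero]

theorem euclidNorm_eq_norm_toLp {n : ℕ} (v : Fin n → ℂ) : euclidNorm v = ‖toLp 2 v‖ := rfl

section

variable {n m : ℕ} {A : Matrix (Fin n) (Fin n) ℂ}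

theorem inner_toLp_mulVec_left (M : Matrix (Fin n) (Fin n) ℂ) (x y : Fin n → ℂ) :
    inner ℂ (toLp 2 (M *ᵥ x)) (toLp 2 y) = inner ℂ (toLp 2 x) (toLp 2 (Mᴴ *ᵥ y)) := by
  simp only [EuclideanSpace.inner_toLp_toLp, star_mulVec, dotProduct_comm y,
    dotProduct_comm (Mᴴ *ᵥ y)]
  rw [dotProduct_mulVec]

noncomputable def shiftedKrylovSubspace (m : ℕ) (A : Matrix (Fin n) (Fin n) ℂ) (r : Fin n → ℂ) :
    Submodule ℂ (EuclideanSpace ℂ (Fin n)) :=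
  Submodule.span ℂ (Set.range fun j : Fin m => toLp 2 (A ^ (j + 1 : ℕ) *ᵥ r))

theorem toLp_aeval_sum_monomial_mulVec (r : Fin n → ℂ) (c : Fin m → ℂ) :
    toLp 2 (aeval A (∑ j : Fin m, monomial (j + 1) (c j)) *ᵥ r) =
      ∑ j, c j • toLp 2 (A ^ (j + 1 : ℕ) *ᵥ r) := by
  simp [map_sum, aeval_monomial, sum_mulVec, ← Algebra.smul_def, smul_mulVec, toLp_sum]

theorem mem_shiftedKrylovSubspace_iff {r : Fin n → ℂ} {u : EuclideanSpace ℂ (Fin n)} :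
    u ∈ shiftedKrylovSubspace m A r ↔
      ∃ g : ℂ[X], g.natDegree ≤ m ∧ g.eval 0 = 0 ∧ toLp 2 (aeval A g *ᵥ r) = u := by
  rw [shiftedKrylovSubspace, Submodule.mem_span_range_iff_exists_fun]
  constructor
  · rintro ⟨c, rfl⟩
    refine ⟨∑ j : Fin m, monomial (j + 1) (c j), ?_, by simp [eval_finsetSum],
      toLp_aeval_sum_monomial_mulVec r c⟩
    exact natDegree_sum_le_of_forall_le _ _ fun j _ => (natDegree_monomial_le _).trans j.isLt
  · rintro ⟨g, hdeg, h0, rfl⟩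
    refine ⟨fun j => g.coeff (j + 1), ?_⟩
    rw [aeval_eq_sum_range' (Nat.lt_succ_of_le hdeg), Finset.sum_range_succ',
      coeff_zero_eq_eval_zero, h0, zero_smul, add_zero, sum_mulVec, toLp_sum,
      ← Fin.sum_univ_eq_sum_range]
    simp [smul_mulVec]

namespace IsGMRESResidual

variable {r s : Fin n → ℂ}

theorem sub_mem (h : IsGMRESResidual m A r s) :
    toLp 2 s - toLp 2 r ∈ shiftedKrylovSubspace m A r := by
  obtain ⟨p, hpdeg, hp0, rfl, -⟩ := h
  refine mem_shiftedKrylovSubspace_iff.2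
    ⟨p - 1, (natDegree_sub_le _ _).trans (by simpa using hpdeg), by simp [hp0], ?_⟩
  simp [sub_mulVec, toLp_sub]

theorem mem_orthogonal (h : IsGMRESResidual m A r s) :
    toLp 2 s ∈ (shiftedKrylovSubspace m A r)ᗮ := by
  obtain ⟨p, hpdeg, hp0, rfl, hmin⟩ := h
  refine Submodule.mem_orthogonal_of_forall_norm_le_norm_add fun u hu => ?_
  obtain ⟨g, hgdeg, hg0, rfl⟩ := mem_shiftedKrylovSubspace_iff.1 hu
  simpa [add_mulVec, euclidNorm_eq_norm_toLp] using
    hmin (p + g) (natDegree_add_le_of_degree_le hpdeg hgdeg) (by simp [hp0, hg0])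

theorem inner_eq_norm_sq (h : IsGMRESResidual m A r s) :
    inner ℂ (toLp 2 s) (toLp 2 r) = (‖toLp 2 s‖ : ℂ) ^ 2 := by
  have h0 := Submodule.inner_left_of_mem_orthogonal h.sub_mem h.mem_orthogonal
  rw [inner_sub_right, sub_eq_zero, inner_self_eq_norm_sq_to_K] at h0
  exact h0.symm

theorem norm_le (h : IsGMRESResidual m A r s) : ‖toLp 2 s‖ ≤ ‖toLp 2 r‖ := by
  obtain ⟨p, -, -, rfl, hmin⟩ := h
  simpa [euclidNorm_eq_norm_toLp] using hmin 1 (by simp) (by simp)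

theorem eq_zero_of_aeval_mulVec_eq_zero (h : IsGMRESResidual m A r s) {p : ℂ[X]}
    (hpdeg : p.natDegree ≤ m) (hp0 : p.eval 0 = 1) (hpr : aeval A p *ᵥ r = 0) : s = 0 := by
  obtain ⟨-, -, -, -, hmin⟩ := h
  have := hmin p hpdeg hp0
  rw [hpr] at this
  simpa [euclidNorm_eq_norm_toLp] using this

theorem linearIndependent_pow_succ_mulVec (hA : IsUnit A) (h : IsGMRESResidual m A r s)
    (hs : s ≠ 0) :
    LinearIndependent ℂ fun j : Fin m => toLp 2 (A ^ (j + 1 : ℕ) *ᵥ r) := by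
  rw [Fintype.linearIndependent_iff]
  intro c hc
  by_contra! hne
  obtain ⟨i, hi⟩ := hne
  set g : ℂ[X] := ∑ j : Fin m, monomial (j + 1) (c j)
  have hg : g ≠ 0 := fun hg0 => hi <| by
    simpa [g, finsetSum_coeff, coeff_monomial, Fin.val_inj] using congrArg (coeff · (i + 1)) hg0
  have hgr : aeval A g *ᵥ r = 0 := by
    rw [← toLp_eq_zero 2, toLp_aeval_sum_monomial_mulVec, hc]
  obtain ⟨p, hpdeg, hp0, hpr⟩ := exists_eval_zero_eq_one_of_aeval_mulVec_eq_zero hA hg hgr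
  refine hs (h.eq_zero_of_aeval_mulVec_eq_zero (hpdeg.trans ?_) hp0 hpr)
  exact natDegree_sum_le_of_forall_le _ _ fun j _ => (natDegree_monomial_le _).trans j.isLt

theorem finrank_orthogonal_shiftedKrylovSubspace (hA : IsUnit A)
    (h : IsGMRESResidual (n - 1) A r s) (hs : s ≠ 0) :
    finrank ℂ (shiftedKrylovSubspace (n - 1) A r)ᗮ = 1 := by
  have hn : n ≠ 0 := by rintro rfl; exact hs (Subsingleton.elim _ _)
  have hsum := (shiftedKrylovSubspace (n - 1) A r).finrank_add_finrank_orthogonal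
  rw [shiftedKrylovSubspace, finrank_span_eq_card (h.linearIndependent_pow_succ_mulVec hA hs),
    Fintype.card_fin, finrank_euclideanSpace_fin] at hsum
  rw [shiftedKrylovSubspace]
  omega

end IsGMRESResidual

theorem mem_orthogonal_shiftedKrylovSubspace_symm (hskew : Aᴴ = -A) {x y : Fin n → ℂ}
    (h : toLp 2 x ∈ (shiftedKrylovSubspace m A y)ᗮ) :
    toLp 2 y ∈ (shiftedKrylovSubspace m A x)ᗮ := by
  rw [shiftedKrylovSubspace, Submodule.mem_orthogonal_span_range_iff] at h ⊢
  intro j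
  have hpow : (A ^ (j + 1 : ℕ))ᴴ = (-1 : ℂ) ^ (j + 1 : ℕ) • A ^ (j + 1 : ℕ) := by
    rw [conjTranspose_pow, hskew, ← neg_one_smul ℂ A, _root_.smul_pow]
  rw [inner_toLp_mulVec_left, hpow, smul_mulVec, toLp_smul, inner_smul_right, ← inner_conj_symm,
    h j, map_zero, mul_zero]

theorem IsGMRESResidual.exists_eq_smul_of_skewHermitian (hA : IsUnit A) (hskew : Aᴴ = -A)
    {x y z : Fin n → ℂ} (hyz : IsGMRESResidual (n - 1) A y z) (hzx : IsGMRESResidual (n - 1) A z x)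
    (hx : x ≠ 0) (hy : y ≠ 0) : ∃ a : ℂ, toLp 2 x = a • toLp 2 y := by
  set W := (shiftedKrylovSubspace (n - 1) A z)ᗮ
  have hyW : toLp 2 y ∈ W := mem_orthogonal_shiftedKrylovSubspace_symm hskew hyz.mem_orthogonal
  obtain ⟨a, ha⟩ := (finrank_eq_one_iff_of_nonzero' (⟨toLp 2 y, hyW⟩ : W) (by simpa using hy)).1
    (hzx.finrank_orthogonal_shiftedKrylovSubspace hA hx) ⟨toLp 2 x, hzx.mem_orthogonal⟩
  exact ⟨a, (congrArg Subtype.val ha).symm⟩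

end

theorem gmres_alternating_residuals_skewHermitian_general {n : ℕ} (q : ℕ)
    (A : Matrix (Fin n) (Fin n) ℂ) (hskew : Aᴴ = -A) (hA : IsUnit A)
    (r : ℕ → Fin n → ℂ) (hr : ∀ k ≤ q, r k ≠ 0)
    (hres : ∀ k < q, IsGMRESResidual (n - 1) A (r k) (r (k + 1))) :
    ∀ k, 1 ≤ k → k < q →
      r (k + 1) = ((euclidNorm (r (k + 1)) ^ 2 / euclidNorm (r k) ^ 2 : ℝ) : ℂ) • r (k - 1) ∧
        0 < euclidNorm (r (k + 1)) ^ 2 / euclidNorm (r k) ^ 2 ∧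
          euclidNorm (r (k + 1)) ^ 2 / euclidNorm (r k) ^ 2 ≤ 1 := by
  intro k hk hkq
  have hprev : IsGMRESResidual (n - 1) A (r (k - 1)) (r k) := by
    simpa [Nat.sub_add_cancel hk] using hres (k - 1) (by omega)
  have hnext := hres k hkq
  have hxpos : 0 < ‖toLp 2 (r (k + 1))‖ := norm_pos_iff.2 (by simpa using hr (k + 1) hkq)
  have hzpos : 0 < ‖toLp 2 (r k)‖ := norm_pos_iff.2 (by simpa using hr k hkq.le)
  obtain ⟨a, ha⟩ := hprev.exists_eq_smul_of_skewHermitian hA hskew hnext (hr (k + 1) hkq)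
    (hr (k - 1) (by omega))
  rw [eq_ofReal_div_of_eq_smul ha hnext.inner_eq_norm_sq hprev.inner_eq_norm_sq
    (norm_pos_iff.1 hzpos)] at ha
  simp only [euclidNorm_eq_norm_toLp]
  refine ⟨by simpa [← toLp_smul] using ha, by positivity,
    div_le_one_of_le₀ (by gcongr; exact hnext.norm_le) (by positivity)⟩

/-- Alternating residuals, skew-Hermitian case: for GMRES(n-1) applied to a skew-Hermitian invertible
matrix, `r_{k+1} = α_k r_{k-1}` with `α_k = ‖r_{k+1}‖²/‖r_k‖² ∈ (0, 1]`. -/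
theorem gmres_alternating_residuals_skewHermitian {n : ℕ} (hn : 2 ≤ n) (q : ℕ)
    (A : Matrix (Fin n) (Fin n) ℂ) (hskew : Aᴴ = -A) (hA : IsUnit A)
    (r : ℕ → Fin n → ℂ) (hr : ∀ k ≤ q, r k ≠ 0)
    (hres : ∀ k < q, IsGMRESResidual (n - 1) A (r k) (r (k + 1))) :
    ∀ k, 1 ≤ k → k < q →
      r (k + 1) = ((euclidNorm (r (k + 1)) ^ 2 / euclidNorm (r k) ^ 2 : ℝ) : ℂ) • r (k - 1) ∧
        0 < euclidNorm (r (k + 1)) ^ 2 / euclidNorm (r k) ^ 2 ∧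
          euclidNorm (r (k + 1)) ^ 2 / euclidNorm (r k) ^ 2 ≤ 1 :=
  gmres_alternating_residuals_skewHermitian_general q A hskew hA r hr hres
end
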